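/- arXiv:2304.01656 — 2 statements merged into one kernel-verified Lean document; each statement's English description precedes it below -/
import Mathlib

section
/- Let K be a field, n a positive integer invertible in K, ζ ∈ K a primitive n-th root of unity, a ∈ K nonzero with Xⁿ − a irreducible over K, L = K(α) with αⁿ = a, and σ the K-automorphism of L with σ(α) = ζ·α. For every positive divisor m of n, the fixed field of the subgroup of Gal(L/K) generated by σ^{n/m} (the subgroup of order m) equals K(α^m). -/
open Polynomial in
/-- In the `Cₙ`-Kummer setup, for every positive divisor `m` of `n`, the
fixed field of the subgroup of `Gal(L/K)` generated by `σ^(n/m)` is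
`K(αᵐ)`. -/
theorem stmt_6 (K L : Type*) [Field K] [Field L] [Algebra K L]
    (n : ℕ) (hn : 0 < n) (hinv : (n : K) ≠ 0)
    (ζ : K) (hζ : IsPrimitiveRoot ζ n)
    (a : K) (ha : a ≠ 0) (hirr : Irreducible (X ^ n - C a))
    (α : L) (hα : α ^ n = algebraMap K L a)
    (hgen : Algebra.adjoin K {α} = ⊤)
    (σ : L ≃ₐ[K] L) (hσ : σ α = algebraMap K L ζ * α)
    (m : ℕ) (hm : 0 < m) (hmn : m ∣ n) :
    IntermediateField.fixedField (Subgroup.zpowers (σ ^ (n / m))) =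
      IntermediateField.adjoin K {α ^ m} := by
  classical
  have hα0 : α ≠ 0 := by
    intro h
    apply ha
    have : algebraMap K L a = 0 := by rw [← hα, h, zero_pow hn.ne']
    exact (algebraMap K L).injective (this.trans (map_zero _).symm)
  have hmonic : (X ^ n - C a).Monic := monic_X_pow_sub_C a hn.ne'
  have heval : Polynomial.aeval α (X ^ n - C a) = 0 := by
    simp [hα]
  have hint : IsIntegral K α := ⟨X ^ n - C a, hmonic, heval⟩
  have htop : IntermediateField.adjoin K {α} = ⊤ :=
    IntermediateField.adjoin_eq_top_of_algebra K {α} hgen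
  have hFD : FiniteDimensional K L := by
    have h1 : FiniteDimensional K (IntermediateField.adjoin K {α}) :=
      IntermediateField.adjoin.finiteDimensional hint
    rw [htop] at h1
    exact (IntermediateField.topEquiv (F := K) (E := L)).toLinearEquiv.finiteDimensional
  set ζ' := algebraMap K L ζ with hζ'def
  have hζ' : IsPrimitiveRoot ζ' n := hζ.map_of_injective (algebraMap K L).injective
  have hpow : ∀ k : ℕ, (σ ^ k) α = ζ' ^ k * α := by
    intro k
    induction k with
    | zero => simp
    | succ k ih =>
      rw [pow_succ', AlgEquiv.mul_apply, ih, map_mul, map_pow, hσ, hζ'def, AlgEquiv.commutes]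
      ring
  have hext : ∀ τ : L ≃ₐ[K] L, τ α = α → τ = 1 := by
    intro τ hτ
    have h1 : (τ : L →ₐ[K] L) = ((1 : L ≃ₐ[K] L) : L →ₐ[K] L) := by
      apply AlgHom.ext_of_adjoin_eq_top hgen
      intro x hx
      rw [Set.mem_singleton_iff] at hx
      subst hx
      simpa using hτ
    exact AlgEquiv.ext fun x => AlgHom.congr_fun h1 x
  have horder : orderOf σ = n := by
    have h1 : σ ^ n = 1 := hext _ (by rw [hpow, hζ'.pow_eq_one, one_mul])
    have h2 : orderOf σ ∣ n := orderOf_dvd_of_pow_eq_one h1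
    have h3 : n ∣ orderOf σ := by
      have h4 : (σ ^ orderOf σ) α = α := by rw [pow_orderOf_eq_one]; rfl
      rw [hpow] at h4
      have h5 : ζ' ^ orderOf σ = 1 :=
        mul_right_cancel₀ hα0 (h4.trans (one_mul α).symm)
      exact (hζ'.pow_eq_one_iff_dvd _).mp h5
    exact Nat.dvd_antisymm h2 h3
  have horder2 : orderOf (σ ^ (n / m)) = m := by
    rw [orderOf_pow, horder, Nat.gcd_eq_right (Nat.div_dvd_of_dvd hmn),
      Nat.div_div_self hmn hn.ne']
  -- the generator fixes α^m
  have hfix : (σ ^ (n / m)) (α ^ m) = α ^ m := by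
    rw [map_pow, hpow, mul_pow, ← pow_mul, Nat.div_mul_cancel hmn, hζ'.pow_eq_one, one_mul]
  -- inclusion
  have hle : IntermediateField.adjoin K {α ^ m} ≤
      IntermediateField.fixedField (Subgroup.zpowers (σ ^ (n / m))) := by
    rw [IntermediateField.adjoin_le_iff]
    intro x hx
    rw [Set.mem_singleton_iff] at hx
    subst hx
    intro g
    obtain ⟨g, hg⟩ := g
    have : Subgroup.zpowers (σ ^ (n / m)) ≤ MulAction.stabilizer (L ≃ₐ[K] L) (α ^ m) := by
      rw [Subgroup.zpowers_le]
      exact hfix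
    exact this hg
  -- degree bounds
  set E := IntermediateField.adjoin K {α ^ m} with hEdef
  have hEtop : IntermediateField.adjoin E {α} = ⊤ := by
    apply IntermediateField.adjoin_eq_top_of_adjoin_eq_top K (E := E)
    exact htop
  have hintE : IsIntegral E α := IsIntegral.tower_top hint
  have hαmE : α ^ m ∈ E := IntermediateField.mem_adjoin_simple_self K (α ^ m)
  have hfrE : Module.finrank E L ≤ m := by
    have h1 := IntermediateField.adjoin.finrank hintE
    rw [hEtop, IntermediateField.finrank_top'] at h1
    rw [h1]
    have hdvd : minpoly E α ∣ X ^ m - C (⟨α ^ m, hαmE⟩ : E) := by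
      apply minpoly.dvd
      simp
    calc (minpoly E α).natDegree ≤ (X ^ m - C (⟨α ^ m, hαmE⟩ : E)).natDegree :=
          Polynomial.natDegree_le_of_dvd hdvd (monic_X_pow_sub_C _ hm.ne').ne_zero
      _ = m := by rw [natDegree_X_pow_sub_C]
  have hfrF : Module.finrank
      (IntermediateField.fixedField (Subgroup.zpowers (σ ^ (n / m)))) L = m := by
    rw [IntermediateField.finrank_fixedField_eq_card,
      Nat.card_zpowers, horder2]
  exact (IntermediateField.eq_of_le_of_finrank_le' hle (by rw [hfrF]; exact hfrE)).symm
end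

section
/- Let K be a field, n a positive integer invertible in K, ζ ∈ K a primitive n-th root of unity, a ∈ K nonzero with Xⁿ − a irreducible over K, L = K(α) with αⁿ = a, and σ the K-automorphism of L with σ(α) = ζ·α. Then for each 0 ≤ i < n, the eigenspace {x ∈ L : σ(x) = ζⁱ·x} equals the one-dimensional K-subspace K·αⁱ of L. -/
open Polynomial in
/-- In the `Cₙ`-Kummer setup, for `0 ≤ i < n` the `ζⁱ`-eigenspace
`{x ∈ L : σ x = ζⁱ·x}` of `σ` equals the one-dimensional `K`-subspace
`K·αⁱ` of `L`. -/
theorem stmt_7 (K L : Type*) [Field K] [Field L] [Algebra K L]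
    (n : ℕ) (hn : 0 < n) (hinv : (n : K) ≠ 0)
    (ζ : K) (hζ : IsPrimitiveRoot ζ n)
    (a : K) (ha : a ≠ 0) (hirr : Irreducible (X ^ n - C a))
    (α : L) (hα : α ^ n = algebraMap K L a)
    (hgen : Algebra.adjoin K {α} = ⊤)
    (σ : L ≃ₐ[K] L) (hσ : σ α = algebraMap K L ζ * α)
    (i : ℕ) (hi : i < n) :
    {x : L | σ x = algebraMap K L (ζ ^ i) * x} =
      (Submodule.span K {α ^ i} : Submodule K L) := by
  have hmonic : (X ^ n - C a).Monic := monic_X_pow_sub_C a hn.ne'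
  have haev : aeval α (X ^ n - C a) = 0 := by simp [hα]
  have hint : IsIntegral K α := ⟨X ^ n - C a, hmonic, haev⟩
  have hmin : X ^ n - C a = minpoly K α :=
    minpoly.eq_of_irreducible_of_monic hirr haev hmonic
  have hdeg : (minpoly K α).natDegree = n := by
    rw [← hmin]; simp
  let e : (Algebra.adjoin K {α}) ≃ₐ[K] L :=
    (Subalgebra.equivOfEq _ _ hgen).trans Subalgebra.topEquiv
  let pb : PowerBasis K L := (Algebra.adjoin.powerBasis hint).map e
  have hpbgen : pb.gen = α := by
    simp [pb, e, Algebra.adjoin.powerBasis_gen]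
  have hpbdim : pb.dim = n := by
    simp [pb, Algebra.adjoin.powerBasis_dim, hdeg]
  have hbasis : ∀ j : Fin pb.dim, pb.basis j = α ^ (j : ℕ) := by
    intro j; rw [pb.basis_eq_pow, hpbgen]
  have hσpow : ∀ j : ℕ, σ (α ^ j) = algebraMap K L (ζ ^ j) * α ^ j := by
    intro j; rw [map_pow, hσ, mul_pow, ← map_pow]
  ext x
  simp only [Set.mem_setOf_eq, SetLike.mem_coe]
  constructor
  · intro hx
    set c : Fin pb.dim → K := fun j => pb.basis.repr x j with hc
    have hrepr : x = ∑ j : Fin pb.dim, c j • pb.basis j := (pb.basis.sum_repr x).symm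
    have h1 : σ x = ∑ j : Fin pb.dim, (c j * ζ ^ (j : ℕ)) • pb.basis j := by
      rw [hrepr, map_sum]
      refine Finset.sum_congr rfl fun j _ => ?_
      rw [map_smul, hbasis, hσpow, Algebra.smul_def, Algebra.smul_def, map_mul]
      ring
    have h2 : algebraMap K L (ζ ^ i) * x = ∑ j : Fin pb.dim, (ζ ^ i * c j) • pb.basis j := by
      rw [hrepr, Finset.mul_sum]
      refine Finset.sum_congr rfl fun j _ => ?_
      rw [Algebra.smul_def, Algebra.smul_def, map_mul]
      ring
    have hcoef : ∀ j : Fin pb.dim, c j * ζ ^ (j : ℕ) = ζ ^ i * c j := by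
      intro j
      have e1 := pb.basis.repr_sum_self (fun j => c j * ζ ^ (j : ℕ))
      have e2 := pb.basis.repr_sum_self (fun j => ζ ^ i * c j)
      have h3 : (fun j : Fin pb.dim => c j * ζ ^ (j : ℕ)) = fun j => ζ ^ i * c j := by
        rw [← e1, ← e2, ← h1, ← h2, hx]
      exact congrFun h3 j
    have hzero : ∀ j : Fin pb.dim, (j : ℕ) ≠ i → c j = 0 := by
      intro j hj
      by_contra hcj
      have hmul : c j * (ζ ^ (j : ℕ) - ζ ^ i) = 0 := by linear_combination hcoef j
      rcases mul_eq_zero.mp hmul with h | h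
      · exact hcj h
      · exact hj (hζ.pow_inj (hpbdim ▸ j.isLt) hi (sub_eq_zero.mp h))
    have hi' : i < pb.dim := hpbdim ▸ hi
    have : x = c ⟨i, hi'⟩ • α ^ i := by
      rw [hrepr, Finset.sum_eq_single ⟨i, hi'⟩]
      · rw [hbasis]
      · intro j _ hj
        have : (j : ℕ) ≠ i := by
          intro h; exact hj (Fin.ext h)
        rw [hzero j this, zero_smul]
      · intro h; exact absurd (Finset.mem_univ _) h
    rw [this]
    exact Submodule.smul_mem _ _ (Submodule.mem_span_singleton_self _)
  · intro hx
    obtain ⟨k, rfl⟩ := Submodule.mem_span_singleton.mp hx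
    rw [map_smul, hσpow, Algebra.smul_def, Algebra.smul_def]
    ring
end
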